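/- For all a ≥ 2, all b ∈ (0,1) and all μ ≥ 1 satisfying (μ−1)b ≤ a−2, one has a·κ(a,1) ≥ bμ·κ̂(μ) + (a−bμ)·κ(a−bμ, 1−b). -/
import Mathlib


noncomputable def fab (a b : ℝ) (p : ℝ × ℝ) : ℝ :=
  b * Real.log b - 2 * p.1 * Real.log p.1
    + ((a + 1 - b) / 2) * Real.log ((a + 1 - b) / 2)
    - ((a + 1 - b) / 2 - p.1) * Real.log ((a + 1 - b) / 2 - p.1)
    - 2 * p.2 * Real.log p.2
    - (b - p.1 - p.2) * Real.log (b - p.1 - p.2)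
    + ((a - 1 - b) / 2) * Real.log ((a - 1 - b) / 2)
    - ((a - 1 - b) / 2 - p.2) * Real.log ((a - 1 - b) / 2 - p.2)

/-- The domain `D_{a,b}` of `f_{a,b}`. -/
def Dab (a b : ℝ) : Set (ℝ × ℝ) :=
  {p | 0 ≤ p.1 ∧ 0 ≤ p.2 ∧ p.1 + p.2 ≤ b ∧ p.1 ≤ (a + 1 - b) / 2 ∧ p.2 ≤ (a - 1 - b) / 2}

/-- The entropy per step `κ(a,b) = (1/a) · sup_{(δ,ε) ∈ D_{a,b}} f_{a,b}(δ,ε)`. -/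
noncomputable def kappa (a b : ℝ) : ℝ := (1 / a) * sSup (fab a b '' Dab a b)

/-- The variational functional `f_μ(δ,ε)` (convention `0 log 0 = 0`, automatic
since `Real.log 0 = 0`). -/
noncomputable def fmu (μ : ℝ) (p : ℝ × ℝ) : ℝ :=
  -2 * p.1 * Real.log p.1 - 2 * p.2 * Real.log p.2
    - (1 - p.1 - p.2) * Real.log (1 - p.1 - p.2)
    - ((μ - 1) / 2 - p.1) * Real.log ((μ - 1) / 2 - p.1)
    - ((μ - 1) / 2 - p.2) * Real.log ((μ - 1) / 2 - p.2)
    + (μ - 1) * Real.log ((μ - 1) / 2)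

/-- The domain `D_μ` of `f_μ`. -/
def Dmu (μ : ℝ) : Set (ℝ × ℝ) :=
  {p | 0 ≤ p.1 ∧ 0 ≤ p.2 ∧ p.1 + p.2 ≤ 1 ∧ p.1 ≤ (μ - 1) / 2 ∧ p.2 ≤ (μ - 1) / 2}

/-- The interface entropy per step `κ̂(μ) = (1/μ) · sup_{(δ,ε) ∈ D_μ} f_μ(δ,ε)`. -/
noncomputable def kappaHat (μ : ℝ) : ℝ := (1 / μ) * sSup (fmu μ '' Dmu μ)


open Real

private lemma mul_log_ge_neg_one {x : ℝ} (hx : 0 ≤ x) : -1 ≤ x * Real.log x := by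
  rcases eq_or_lt_of_le hx with h | h
  · simp [← h]
  · have h1 : Real.log x⁻¹ ≤ x⁻¹ - 1 := Real.log_le_sub_one_of_pos (by positivity)
    rw [Real.log_inv] at h1
    have h2 : 1 - x⁻¹ ≤ Real.log x := by linarith
    have h3 : x * (1 - x⁻¹) ≤ x * Real.log x := mul_le_mul_of_nonneg_left h2 hx
    have h4 : x * x⁻¹ = 1 := mul_inv_cancel₀ (ne_of_gt h)
    nlinarith

private lemma logsum {u v x y : ℝ} (hu : 0 ≤ u) (hux : u ≤ x) (hv : 0 ≤ v) (hvy : v ≤ y) :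
    u * Real.log (x / u) + v * Real.log (y / v) ≤ (u + v) * Real.log ((x + y) / (u + v)) := by
  rcases eq_or_lt_of_le hu with h0u | h0u
  · rcases eq_or_lt_of_le hv with h0v | h0v
    · simp [← h0u, ← h0v]
    · simp only [← h0u, zero_mul, zero_add]
      have : Real.log (y / v) ≤ Real.log ((x + y) / v) := by
        apply Real.log_le_log (div_pos (lt_of_lt_of_le h0v hvy) h0v)
        gcongr
        linarith
      exact mul_le_mul_of_nonneg_left this hv
  rcases eq_or_lt_of_le hv with h0v | h0v
  · simp only [← h0v, zero_mul, add_zero]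
    have : Real.log (x / u) ≤ Real.log ((x + y) / u) := by
      apply Real.log_le_log (div_pos (lt_of_lt_of_le h0u hux) h0u)
      gcongr
      linarith
    exact mul_le_mul_of_nonneg_left this hu
  · have hx : 0 < x := lt_of_lt_of_le h0u hux
    have hy : 0 < y := lt_of_lt_of_le h0v hvy
    have huv : 0 < u + v := by linarith
    have hxy : 0 < x + y := by linarith
    have e1 : Real.log ((x / u) / ((x + y) / (u + v)))
        = Real.log (x / u) - Real.log ((x + y) / (u + v)) :=
      Real.log_div (by positivity) (by positivity)
    have e2 : Real.log ((y / v) / ((x + y) / (u + v)))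
        = Real.log (y / v) - Real.log ((x + y) / (u + v)) :=
      Real.log_div (by positivity) (by positivity)
    have b1 : Real.log ((x / u) / ((x + y) / (u + v))) ≤ (x / u) / ((x + y) / (u + v)) - 1 :=
      Real.log_le_sub_one_of_pos (by positivity)
    have b2 : Real.log ((y / v) / ((x + y) / (u + v))) ≤ (y / v) / ((x + y) / (u + v)) - 1 :=
      Real.log_le_sub_one_of_pos (by positivity)
    have k1 : u * Real.log ((x / u) / ((x + y) / (u + v)))
        ≤ u * ((x / u) / ((x + y) / (u + v)) - 1) := mul_le_mul_of_nonneg_left b1 hu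
    have k2 : v * Real.log ((y / v) / ((x + y) / (u + v)))
        ≤ v * ((y / v) / ((x + y) / (u + v)) - 1) := mul_le_mul_of_nonneg_left b2 hv
    have key : u * ((x / u) / ((x + y) / (u + v)) - 1) + v * ((y / v) / ((x + y) / (u + v)) - 1) = 0 := by
      field_simp
      ring
    nlinarith [k1, k2, e1, e2]

noncomputable def gent (X d : ℝ) : ℝ :=
  X * Real.log X - d * Real.log d - (X - d) * Real.log (X - d)

private lemma gent_eq {X d : ℝ} (hd : 0 ≤ d) (hdX : d ≤ X) :
    gent X d = d * Real.log (X / d) + (X - d) * Real.log (X / (X - d)) := by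
  rcases eq_or_lt_of_le hd with h0 | h0
  · rcases eq_or_ne X 0 with hX | hX
    · simp [gent, ← h0, hX]
    · simp [gent, ← h0, div_self hX]
  · have hX : 0 < X := lt_of_lt_of_le h0 hdX
    rcases eq_or_lt_of_le hdX with hE | hE
    · simp [gent, hE, div_self (ne_of_gt hX)]
    · rw [Real.log_div (ne_of_gt hX) (ne_of_gt h0),
        Real.log_div (ne_of_gt hX) (ne_of_gt (sub_pos.mpr hE))]
      unfold gent; ring

private lemma gent_superadd {X d X' d' : ℝ} (hd : 0 ≤ d) (hdX : d ≤ X) (hd' : 0 ≤ d')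
    (hd'X : d' ≤ X') : gent X d + gent X' d' ≤ gent (X + X') (d + d') := by
  rw [gent_eq hd hdX, gent_eq hd' hd'X, gent_eq (by linarith) (by linarith)]
  have L1 := logsum hd hdX hd' hd'X
  have L2 := logsum (sub_nonneg.mpr hdX) (by linarith : X - d ≤ X)
    (sub_nonneg.mpr hd'X) (by linarith : X' - d' ≤ X')
  rw [show X - d + (X' - d') = X + X' - (d + d') by ring] at L2
  linarith

private lemma gent_smul {b : ℝ} (hb : 0 < b) (X d : ℝ) :
    b * gent X d = gent (b * X) (b * d) := by
  have hml : ∀ x : ℝ, (b * x) * Real.log (b * x) = b * (x * Real.log x) + (b * x) * Real.log b := by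
    intro x
    rcases eq_or_ne x 0 with h | h
    · simp [h]
    · rw [Real.log_mul (ne_of_gt hb) h]; ring
  unfold gent
  rw [show b * X - b * d = b * (X - d) by ring, hml X, hml d, hml (X - d)]
  ring

private lemma fab_eq (a b : ℝ) (p : ℝ × ℝ) :
    fab a b p = gent b p.1 + gent (b - p.1) p.2
      + gent ((a + 1 - b) / 2) p.1 + gent ((a - 1 - b) / 2) p.2 := by
  unfold fab gent; ring

private lemma fmu_eq (μ : ℝ) (p : ℝ × ℝ) :
    fmu μ p = gent 1 p.1 + gent (1 - p.1) p.2
      + gent ((μ - 1) / 2) p.1 + gent ((μ - 1) / 2) p.2 := by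
  unfold fmu gent; simp [Real.log_one]; ring

private lemma key_ineq (a b μ : ℝ) (ha : 2 ≤ a) (hb0 : 0 < b) (hb1 : b < 1) (hμ : 1 ≤ μ)
    (h : (μ - 1) * b ≤ a - 2) {p q : ℝ × ℝ} (hp : p ∈ Dmu μ) (hq : q ∈ Dab (a - b * μ) (1 - b)) :
    b * fmu μ p + fab (a - b * μ) (1 - b) q ≤ fab a 1 (b * p.1 + q.1, b * p.2 + q.2) := by
  obtain ⟨hp1, hp2, hps, hpX, hpY⟩ := hp
  obtain ⟨hq1, hq2, hqs, hqX, hqY⟩ := hq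
  rw [fmu_eq, fab_eq, fab_eq]
  simp only
  have A1 : gent (b * 1) (b * p.1) + gent (1 - b) q.1
      ≤ gent (b * 1 + (1 - b)) (b * p.1 + q.1) :=
    gent_superadd (by positivity) (by nlinarith) hq1 (by linarith)
  have A2 : gent (b * (1 - p.1)) (b * p.2) + gent (1 - b - q.1) q.2
      ≤ gent (b * (1 - p.1) + (1 - b - q.1)) (b * p.2 + q.2) :=
    gent_superadd (by positivity) (by nlinarith) hq2 (by linarith)
  have A3 : gent (b * ((μ - 1) / 2)) (b * p.1) + gent ((a - b * μ + 1 - (1 - b)) / 2) q.1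
      ≤ gent (b * ((μ - 1) / 2) + (a - b * μ + 1 - (1 - b)) / 2) (b * p.1 + q.1) :=
    gent_superadd (by positivity) (by nlinarith) hq1 hqX
  have A4 : gent (b * ((μ - 1) / 2)) (b * p.2) + gent ((a - b * μ - 1 - (1 - b)) / 2) q.2
      ≤ gent (b * ((μ - 1) / 2) + (a - b * μ - 1 - (1 - b)) / 2) (b * p.2 + q.2) :=
    gent_superadd (by positivity) (by nlinarith) hq2 hqY
  rw [show b * 1 + (1 - b) = (1 : ℝ) by ring] at A1
  rw [show b * (1 - p.1) + (1 - b - q.1) = 1 - (b * p.1 + q.1) by ring] at A2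
  rw [show b * ((μ - 1) / 2) + (a - b * μ + 1 - (1 - b)) / 2 = (a + 1 - 1) / 2 by ring] at A3
  rw [show b * ((μ - 1) / 2) + (a - b * μ - 1 - (1 - b)) / 2 = (a - 1 - 1) / 2 by ring] at A4
  have S1 := gent_smul hb0 1 p.1
  have S2 := gent_smul hb0 (1 - p.1) p.2
  have S3 := gent_smul hb0 ((μ - 1) / 2) p.1
  have S4 := gent_smul hb0 ((μ - 1) / 2) p.2
  linarith

private lemma fab_bdd (a : ℝ) (ha : 2 ≤ a) :
    BddAbove (fab a 1 '' Dab a 1) := by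
  refine ⟨7 + ((a + 1 - 1) / 2) * Real.log ((a + 1 - 1) / 2)
      + ((a - 1 - 1) / 2) * Real.log ((a - 1 - 1) / 2), ?_⟩
  rintro x ⟨p, ⟨hp1, hp2, hps, hpX, hpY⟩, rfl⟩
  have B1 := mul_log_ge_neg_one hp1
  have B2 := mul_log_ge_neg_one hp2
  have B3 := mul_log_ge_neg_one (sub_nonneg.mpr hpX)
  have B4 := mul_log_ge_neg_one (sub_nonneg.mpr hpY)
  have B5 := mul_log_ge_neg_one (by linarith : (0:ℝ) ≤ 1 - p.1 - p.2)
  unfold fab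
  rw [Real.log_one]
  nlinarith

/-- For `a ≥ 2`, `b ∈ (0,1)`, `μ ≥ 1` with `(μ−1)b ≤ a−2`:
`a·κ(a,1) ≥ bμ·κ̂(μ) + (a−bμ)·κ(a−bμ, 1−b)`. -/
theorem stmt11 (a b μ : ℝ) (ha : 2 ≤ a) (hb0 : 0 < b) (hb1 : b < 1) (hμ : 1 ≤ μ)
    (h : (μ - 1) * b ≤ a - 2) :
    b * μ * kappaHat μ + (a - b * μ) * kappa (a - b * μ) (1 - b) ≤ a * kappa a 1 := by
  have hμ0 : 0 < μ := by linarith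
  have hm : 0 < a - b * μ := by nlinarith
  have ha0 : 0 < a := by linarith
  set S1 := sSup (fmu μ '' Dmu μ) with hS1
  set S2 := sSup (fab (a - b * μ) (1 - b) '' Dab (a - b * μ) (1 - b)) with hS2
  set S3 := sSup (fab a 1 '' Dab a 1) with hS3
  have hbdd3 := fab_bdd a ha
  have hne1 : (fmu μ '' Dmu μ).Nonempty := by
    refine ⟨fmu μ (0, 0), Set.mem_image_of_mem _ ?_⟩
    refine ⟨le_refl 0, le_refl 0, by norm_num, by simp; linarith, by simp; linarith⟩
  have hne2 : (fab (a - b * μ) (1 - b) '' Dab (a - b * μ) (1 - b)).Nonempty := by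
    refine ⟨fab (a - b * μ) (1 - b) (0, 0), Set.mem_image_of_mem _ ?_⟩
    refine ⟨le_refl 0, le_refl 0, by simp; linarith, by simp; nlinarith, by simp; nlinarith⟩
  -- the key: for all p ∈ Dmu, q ∈ Dab, b * fmu p + fab q ≤ S3
  have key : ∀ p ∈ Dmu μ, ∀ q ∈ Dab (a - b * μ) (1 - b),
      b * fmu μ p + fab (a - b * μ) (1 - b) q ≤ S3 := by
    intro p hp q hq
    refine le_trans (key_ineq a b μ ha hb0 hb1 hμ h hp hq) (le_csSup hbdd3 ?_)
    refine Set.mem_image_of_mem _ ?_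
    obtain ⟨hp1, hp2, hps, hpX, hpY⟩ := hp
    obtain ⟨hq1, hq2, hqs, hqX, hqY⟩ := hq
    refine ⟨by positivity, by positivity, by simp; nlinarith, ?_, ?_⟩
    · simp only; nlinarith
    · simp only; nlinarith
  have main : b * S1 + S2 ≤ S3 := by
    have step1 : ∀ y ∈ (fab (a - b * μ) (1 - b) '' Dab (a - b * μ) (1 - b)),
        y ≤ S3 - b * S1 := by
      rintro y ⟨q, hq, rfl⟩
      have : b * S1 ≤ S3 - fab (a - b * μ) (1 - b) q := by
        rw [hS1]
        rw [show b * sSup (fmu μ '' Dmu μ) = sSup (fmu μ '' Dmu μ) * b by ring,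
          ← le_div_iff₀ hb0]
        refine csSup_le hne1 ?_
        rintro x ⟨p, hp, rfl⟩
        rw [le_div_iff₀ hb0]
        have := key p hp q hq
        linarith
      linarith
    have := csSup_le hne2 step1
    rw [← hS2] at this
    linarith
  rw [kappaHat, kappa, kappa, ← hS1, ← hS2, ← hS3]
  have e1 : b * μ * (1 / μ * S1) = b * S1 := by field_simp
  have e2 : (a - b * μ) * (1 / (a - b * μ) * S2) = S2 := by field_simp
  have e3 : a * (1 / a * S3) = S3 := by field_simp
  rw [e1, e2, e3]
  exact main
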